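/- arXiv:1806.08934 — 7 statements merged into one kernel-verified Lean document; each statement's English description precedes it below -/
import Mathlib

section
/- Let K be a zero-dimensional compact line. Then for all x < y in K there exist u, v ∈ K with x ≤ u < v ≤ y such that the closed interval [u,v] equals {u,v} (i.e., v is the immediate successor of u). -/
/-- In a zero-dimensional compact line, between any `x < y` there is a jump
`u < v` with `x ≤ u < v ≤ y` and `[u,v] = {u,v}`. -/
theorem exists_jump_of_zeroDim_compact_line (K : Type*) [LinearOrder K]
    [TopologicalSpace K] [OrderTopology K] [CompactSpace K]
    (hzd : ∀ (x : K) (U : Set K), IsOpen U → x ∈ U → ∃ V : Set K, IsClopen V ∧ x ∈ V ∧ V ⊆ U) :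
    ∀ x y : K, x < y → ∃ u v : K, x ≤ u ∧ u < v ∧ v ≤ y ∧ Set.Icc u v = {u, v} := by
  intro x y hxy
  obtain ⟨V, hV, hxV, hVsub⟩ := hzd x (Set.Iio y) isOpen_Iio hxy
  -- S = V ∩ Icc x y, compact nonempty
  set S : Set K := V ∩ Set.Icc x y with hS
  have hScl : IsClosed S := hV.isClosed.inter isClosed_Icc
  have hScp : IsCompact S := hScl.isCompact
  have hSne : S.Nonempty := ⟨x, hxV, Set.left_mem_Icc.2 hxy.le⟩
  obtain ⟨u, huS, humax⟩ := hScp.exists_isGreatest hSne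
  have hxu : x ≤ u := huS.2.1
  have huy : u < y := hVsub huS.1
  -- T = Vᶜ ∩ Icc u y
  set T : Set K := Vᶜ ∩ Set.Icc u y with hT
  have hTcl : IsClosed T := hV.isOpen.isClosed_compl.inter isClosed_Icc
  have hyV : y ∉ V := fun h => lt_irrefl y (hVsub h)
  have hTne : T.Nonempty := ⟨y, hyV, Set.right_mem_Icc.2 huy.le⟩
  obtain ⟨v, hvT, hvmin⟩ := hTcl.isCompact.exists_isLeast hTne
  have huv : u < v := lt_of_le_of_ne hvT.2.1 (fun h => hvT.1 (h ▸ huS.1))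
  refine ⟨u, v, hxu, huv, hvT.2.2, ?_⟩
  ext z
  simp only [Set.mem_Icc, Set.mem_insert_iff, Set.mem_singleton_iff]
  constructor
  · rintro ⟨huz, hzv⟩
    by_contra hne
    push_neg at hne
    have hzu : u < z := lt_of_le_of_ne huz (fun h => hne.1 h.symm)
    have hzv' : z < v := lt_of_le_of_ne hzv hne.2
    by_cases hzV : z ∈ V
    · exact absurd (humax ⟨hzV, hxu.trans hzu.le, hzv'.le.trans hvT.2.2⟩) (not_le.2 hzu)
    · exact absurd (hvmin ⟨hzV, hzu.le, hzv'.le.trans hvT.2.2⟩) (not_le.2 hzv')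
  · rintro (rfl | rfl)
    exacts [⟨le_rfl, huv.le⟩, ⟨huv.le, le_rfl⟩]
end

section
/- Let K be a compact line and L the set of points of K that are either left-isolated or right-isolated, i.e., L = {x ∈ K : ∃ y ≠ x, [min(x,y), max(x,y)] = {x,y}}. If K is zero-dimensional, then every element x ∈ K \ L is the supremum of some subset of L. -/
/-- In a zero-dimensional compact line `K`, with `L` the set of left- or right-isolated
points, every point of `K \ L` is the supremum of some subset of `L`. -/
theorem mem_compl_isolated_is_sup (K : Type*) [LinearOrder K]
    [TopologicalSpace K] [OrderTopology K] [CompactSpace K]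
    (hzd : ∀ (x : K) (U : Set K), IsOpen U → x ∈ U → ∃ V : Set K, IsClopen V ∧ x ∈ V ∧ V ⊆ U)
    (L : Set K)
    (hL : L = {x : K | ∃ y : K, y ≠ x ∧ Set.Icc (min x y) (max x y) = {x, y}}) :
    ∀ x : K, x ∉ L → ∃ S : Set K, S ⊆ L ∧ IsLUB S x := by
  intro x hx
  refine ⟨L ∩ Set.Iio x, Set.inter_subset_left, ?_, ?_⟩
  · rintro z ⟨-, hz⟩
    exact le_of_lt hz
  · intro b hb
    by_contra hbx
    push_neg at hbx
    obtain ⟨V, hV, hxV, hVsub⟩ := hzd x (Set.Ioi b) isOpen_Ioi hbx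
    have hWc : IsClosed (V ∩ Set.Iic x) := hV.isClosed.inter isClosed_Iic
    obtain ⟨m, ⟨hmV, hmx⟩, hmin⟩ :=
      hWc.isCompact.exists_isLeast ⟨x, hxV, le_refl x⟩
    have hbm : b < m := hVsub hmV
    obtain ⟨c, hcm, hIoc⟩ :=
      exists_Ioc_subset_of_mem_nhds (hV.isOpen.mem_nhds hmV) ⟨b, hbm⟩
    have hIoo : Set.Ioo c m = ∅ := by
      rw [Set.eq_empty_iff_forall_notMem]
      rintro z ⟨hz1, hz2⟩
      have hzV : z ∈ V := hIoc ⟨hz1, hz2.le⟩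
      have : m ≤ z := hmin ⟨hzV, hz2.le.trans hmx⟩
      exact absurd hz2 (not_lt.2 this)
    have hIcc : Set.Icc c m = {c, m} := by
      ext z
      simp only [Set.mem_Icc, Set.mem_insert_iff, Set.mem_singleton_iff]
      constructor
      · rintro ⟨h1, h2⟩
        rcases eq_or_lt_of_le h1 with h | h
        · exact Or.inl h.symm
        rcases eq_or_lt_of_le h2 with h' | h'
        · exact Or.inr h'
        · exact absurd hIoo (Set.nonempty_iff_ne_empty.1 ⟨z, h, h'⟩)
      · rintro (rfl | rfl)
        · exact ⟨le_rfl, hcm.le⟩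
        · exact ⟨hcm.le, le_rfl⟩
    have hmL : m ∈ L := by
      rw [hL]
      refine ⟨c, hcm.ne, ?_⟩
      rw [min_eq_right hcm.le, max_eq_left hcm.le, hIcc, Set.pair_comm]
    rcases eq_or_lt_of_le hmx with rfl | hlt
    · exact hx hmL
    · exact absurd (hb ⟨hmL, hlt⟩) (not_le.2 hbm)
end

section
/- Let K be a zero-dimensional compact line and L its set of left- or right-isolated points. If L, ordered as a suborder of K, is a σ-scattered linear order, then K is Radon-Nikodým compact: there is a lower semicontinuous metric fragmenting K. -/
/-- `d` is a metric (as a distance function) on `X`. -/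
def IsMetricD {X : Type*} (d : X → X → ℝ) : Prop :=
  (∀ x y, 0 ≤ d x y) ∧ (∀ x y, d x y = 0 ↔ x = y) ∧ (∀ x y, d x y = d y x) ∧
    ∀ x y z, d x z ≤ d x y + d y z

/-- `d` fragments the topological space `X`. -/
def Fragments {X : Type*} [TopologicalSpace X] (d : X → X → ℝ) : Prop :=
  ∀ Y : Set X, Y.Nonempty → ∀ ε : ℝ, 0 < ε →
    ∃ U : Set X, IsOpen U ∧ (Y ∩ U).Nonempty ∧ ∀ x ∈ Y ∩ U, ∀ y ∈ Y ∩ U, d x y < ε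

/-- `d` is a lower semicontinuous metric. -/
def LSCMetric {X : Type*} [TopologicalSpace X] (d : X → X → ℝ) : Prop :=
  ∀ r : ℝ, 0 < r → IsClosed {p : X × X | d p.1 p.2 ≤ r}

/-- A subset `S` of a linear order is scattered: it contains no copy of `ℚ`. -/
def ScatteredSub {K : Type*} [LinearOrder K] (S : Set K) : Prop :=
  ¬ ∃ f : ℚ → K, StrictMono f ∧ ∀ q, f q ∈ S

/-- `S` is σ-scattered: a countable union of scattered suborders. -/
def SigmaScatteredSub {K : Type*} [LinearOrder K] (S : Set K) : Prop :=
  ∃ T : ℕ → Set K, (∀ n, ScatteredSub (T n)) ∧ S = ⋃ n, T n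

namespace RNaux

open Set

variable {K : Type*} [LinearOrder K]

/-- There is a jump `(a,b)` between `x` and `y` with an endpoint in `T`. -/
def Jmp (T : Set K) (x y : K) : Prop :=
  ∃ a b : K, min x y ≤ a ∧ a < b ∧ b ≤ max x y ∧ Set.Icc a b = {a, b} ∧ (a ∈ T ∨ b ∈ T)

lemma jmp_comm {T : Set K} {x y : K} : Jmp T x y ↔ Jmp T y x := by
  unfold Jmp; rw [min_comm, max_comm]

lemma not_jmp_self {T : Set K} {x : K} : ¬ Jmp T x x := by
  rintro ⟨a, b, h1, h2, h3, -, -⟩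
  rw [min_self] at h1; rw [max_self] at h3
  exact absurd ((h3.trans h1)) (not_le.2 h2)

lemma jump_le_iff {a b c : K} (hab : a < b) (hic : Set.Icc a b = {a, b}) :
    c ≤ a ↔ c < b := by
  constructor
  · exact fun h => lt_of_le_of_lt h hab
  · intro h
    by_contra hc
    push_neg at hc
    have : c ∈ Set.Icc a b := ⟨le_of_lt hc, le_of_lt h⟩
    rw [hic] at this
    rcases this with rfl | rfl
    · exact lt_irrefl c hc
    · exact lt_irrefl c h

lemma jump_ge_iff {a b c : K} (hab : a < b) (hic : Set.Icc a b = {a, b}) :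
    b ≤ c ↔ a < c := by
  constructor
  · exact fun h => lt_of_lt_of_le hab h
  · intro h
    by_contra hc
    push_neg at hc
    have : c ∈ Set.Icc a b := ⟨le_of_lt h, le_of_lt hc⟩
    rw [hic] at this
    rcases this with rfl | rfl
    · exact lt_irrefl c h
    · exact lt_irrefl c hc

lemma jmp_split {T : Set K} {x y z : K} (h : Jmp T x z) : Jmp T x y ∨ Jmp T y z := by
  obtain ⟨a, b, hmin, hab, hmax, hic, hT⟩ := h
  have hcase : (x ≤ a ∧ b ≤ z) ∨ (z ≤ a ∧ b ≤ x) := by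
    rcases min_le_iff.1 hmin with h1 | h1 <;> rcases le_max_iff.1 hmax with h2 | h2
    · exact absurd ((hab.trans_le h2).trans_le h1) (lt_irrefl a)
    · exact Or.inl ⟨h1, h2⟩
    · exact Or.inr ⟨h1, h2⟩
    · exact absurd ((hab.trans_le h2).trans_le h1) (lt_irrefl a)
  have hy : y ≤ a ∨ b ≤ y := by
    by_contra hc
    push_neg at hc
    have : y ∈ Set.Icc a b := ⟨le_of_lt hc.1, le_of_lt hc.2⟩
    rw [hic] at this
    rcases this with rfl | rfl
    · exact lt_irrefl y hc.1
    · exact lt_irrefl y hc.2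
  rcases hcase with ⟨h1, h2⟩ | ⟨h1, h2⟩
  · rcases hy with hy | hy
    · exact Or.inr ⟨a, b, le_trans (min_le_left y z) hy, hab, le_trans h2 (le_max_right y z),
        hic, hT⟩
    · exact Or.inl ⟨a, b, le_trans (min_le_left x y) h1, hab, le_trans hy (le_max_right x y),
        hic, hT⟩
  · rcases hy with hy | hy
    · exact Or.inl ⟨a, b, le_trans (min_le_right x y) hy, hab, le_trans h2 (le_max_left x y),
        hic, hT⟩
    · exact Or.inr ⟨a, b, le_trans (min_le_right y z) h1, hab, le_trans hy (le_max_left y z),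
        hic, hT⟩

section Topo

variable [TopologicalSpace K] [OrderTopology K]

/-- Openness of the set of pairs witnessing a specific jump. -/
lemma jmp_open (T : Set K) {x y : K} (h : Jmp T x y) :
    ∃ V : Set (K × K), IsOpen V ∧ (x, y) ∈ V ∧ ∀ q ∈ V, Jmp T q.1 q.2 := by
  obtain ⟨a, b, hmin, hab, hmax, hic, hT⟩ := h
  refine ⟨(Set.Iio b ×ˢ Set.Ioi a) ∪ (Set.Ioi a ×ˢ Set.Iio b),
    ((isOpen_Iio.prod isOpen_Ioi).union (isOpen_Ioi.prod isOpen_Iio)), ?_, ?_⟩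
  · have hcase : (x ≤ a ∧ b ≤ y) ∨ (y ≤ a ∧ b ≤ x) := by
      rcases min_le_iff.1 hmin with h1 | h1 <;> rcases le_max_iff.1 hmax with h2 | h2
      · exact absurd ((hab.trans_le h2).trans_le h1) (lt_irrefl a)
      · exact Or.inl ⟨h1, h2⟩
      · exact Or.inr ⟨h1, h2⟩
      · exact absurd ((hab.trans_le h2).trans_le h1) (lt_irrefl a)
    rcases hcase with ⟨h1, h2⟩ | ⟨h1, h2⟩
    · exact Or.inl ⟨(jump_le_iff hab hic).1 h1, (jump_ge_iff hab hic).1 h2⟩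
    · exact Or.inr ⟨(jump_ge_iff hab hic).1 h2, (jump_le_iff hab hic).1 h1⟩
  · rintro ⟨u, v⟩ (⟨hu, hv⟩ | ⟨hu, hv⟩)
    · exact ⟨a, b, le_trans (min_le_left u v) ((jump_le_iff hab hic).2 hu), hab,
        le_trans ((jump_ge_iff hab hic).2 hv) (le_max_right u v), hic, hT⟩
    · exact ⟨a, b, le_trans (min_le_right u v) ((jump_le_iff hab hic).2 hv), hab,
        le_trans ((jump_ge_iff hab hic).2 hu) (le_max_left u v), hic, hT⟩

/-- In a zero-dimensional compact line there is a jump between any `x < y`. -/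
lemma exists_jump [CompactSpace K]
    (hzd : ∀ (x : K) (U : Set K), IsOpen U → x ∈ U → ∃ V : Set K, IsClopen V ∧ x ∈ V ∧ V ⊆ U)
    {x y : K} (hxy : x < y) :
    ∃ a b : K, x ≤ a ∧ a < b ∧ b ≤ y ∧ Set.Icc a b = {a, b} := by
  obtain ⟨V, hV, hxV, hVsub⟩ := hzd x (Set.Iio y) isOpen_Iio hxy
  have hScomp : IsCompact (V ∩ Set.Icc x y) :=
    (hV.isClosed.inter isClosed_Icc).isCompact
  obtain ⟨a, ⟨haV, hax, hay⟩, hamax⟩ :=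
    hScomp.exists_isGreatest ⟨x, hxV, le_refl x, le_of_lt hxy⟩
  have hay' : a < y := hVsub haV
  have hyV : y ∉ V := fun h => lt_irrefl y (hVsub h)
  obtain ⟨b, ⟨hbV, hab0, hby⟩, hbmin⟩ :=
    ((hV.isOpen.isClosed_compl.inter isClosed_Icc).isCompact).exists_isLeast
      ⟨y, hyV, le_of_lt hay', le_refl y⟩
  have hab : a < b := lt_of_le_of_ne hab0 (fun h => hbV (h ▸ haV))
  refine ⟨a, b, hax, hab, hby, ?_⟩
  apply Set.Subset.antisymm
  · intro c hc
    rcases eq_or_lt_of_le hc.1 with h1 | h1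
    · exact Or.inl h1.symm
    rcases eq_or_lt_of_le hc.2 with h2 | h2
    · exact Or.inr h2
    exfalso
    by_cases hcV : c ∈ V
    · exact absurd (hamax ⟨hcV, hax.trans (le_of_lt h1), (le_of_lt h2).trans hby⟩)
        (not_le.2 h1)
    · exact absurd (hbmin ⟨hcV, le_of_lt h1, (le_of_lt h2).trans hby⟩) (not_le.2 h2)
  · rintro c (rfl | rfl)
    · exact ⟨le_refl _, le_of_lt hab⟩
    · exact ⟨le_of_lt hab, le_refl _⟩

end Topo

/-! ### The tree order on finite binary sequences

The list is read with the head being the *first* branching decision from the root.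
`TL x y` means `x` is strictly to the left of `y` in the infix order of the binary tree. -/

def TL (x y : List Bool) : Prop :=
  (∃ p u, x = p ++ false :: u ∧ y = p) ∨
  (∃ p v, x = p ∧ y = p ++ true :: v) ∨
  (∃ p u v, x = p ++ false :: u ∧ y = p ++ true :: v)

lemma TL.cons {x y : List Bool} (b : Bool) (h : TL x y) : TL (b :: x) (b :: y) := by
  rcases h with ⟨p, u, rfl, rfl⟩ | ⟨p, v, rfl, rfl⟩ | ⟨p, u, v, rfl, rfl⟩
  · exact Or.inl ⟨b :: y, u, rfl, rfl⟩
  · exact Or.inr (Or.inl ⟨b :: x, v, rfl, rfl⟩)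
  · exact Or.inr (Or.inr ⟨b :: p, u, v, rfl, rfl⟩)

lemma TL_total : ∀ x y : List Bool, x = y ∨ TL x y ∨ TL y x := by
  intro x
  induction x with
  | nil =>
    intro y
    match y with
    | [] => exact Or.inl rfl
    | false :: y' => exact Or.inr (Or.inr (Or.inl ⟨[], y', rfl, rfl⟩))
    | true :: y' => exact Or.inr (Or.inl (Or.inr (Or.inl ⟨[], y', rfl, rfl⟩)))
  | cons a x' ih =>
    intro y
    match y with
    | [] =>
      match a with
      | false => exact Or.inr (Or.inl (Or.inl ⟨[], x', rfl, rfl⟩))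
      | true => exact Or.inr (Or.inr (Or.inr (Or.inl ⟨[], x', rfl, rfl⟩)))
    | b :: y' =>
      match a, b with
      | false, true => exact Or.inr (Or.inl (Or.inr (Or.inr ⟨[], x', y', rfl, rfl⟩)))
      | true, false => exact Or.inr (Or.inr (Or.inr (Or.inr ⟨[], y', x', rfl, rfl⟩)))
      | false, false =>
        rcases ih y' with rfl | h | h
        · exact Or.inl rfl
        · exact Or.inr (Or.inl (TL.cons false h))
        · exact Or.inr (Or.inr (TL.cons false h))
      | true, true =>
        rcases ih y' with rfl | h | h
        · exact Or.inl rfl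
        · exact Or.inr (Or.inl (TL.cons true h))
        · exact Or.inr (Or.inr (TL.cons true h))

lemma TL_dense {x y : List Bool} (h : TL x y) : ∃ z, TL x z ∧ TL z y := by
  rcases h with ⟨p, u, rfl, rfl⟩ | ⟨p, v, rfl, rfl⟩ | ⟨p, u, v, rfl, rfl⟩
  · refine ⟨y ++ false :: (u ++ [true]), ?_, Or.inl ⟨y, u ++ [true], rfl, rfl⟩⟩
    refine Or.inr (Or.inl ⟨y ++ false :: u, [], rfl, ?_⟩)
    simp
  · refine ⟨x ++ true :: (v ++ [false]), Or.inr (Or.inl ⟨x, v ++ [false], rfl, rfl⟩), ?_⟩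
    refine Or.inl ⟨x ++ true :: v, [], ?_, rfl⟩
    simp
  · exact ⟨p, Or.inl ⟨p, u, rfl, rfl⟩, Or.inr (Or.inl ⟨p, v, rfl, rfl⟩)⟩

/-! ### The recursive splitting construction -/

/-- `P T S ab` : `ab` is a jump with an endpoint in `T`, and `S` has points on both sides. -/
def P (T S : Set K) (ab : K × K) : Prop :=
  ab.1 < ab.2 ∧ Set.Icc ab.1 ab.2 = {ab.1, ab.2} ∧ (ab.1 ∈ T ∨ ab.2 ∈ T) ∧
    (∃ z ∈ S, z ≤ ab.1) ∧ (∃ w ∈ S, ab.2 ≤ w)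

open Classical in
noncomputable def Jc [Nonempty K] (T S : Set K) : K × K :=
  if h : ∃ ab : K × K, P T S ab then h.choose
  else (Classical.arbitrary K, Classical.arbitrary K)

lemma Jc_spec [Nonempty K] {T S : Set K} (h : ∃ ab : K × K, P T S ab) :
    P T S (Jc T S) := by
  unfold Jc
  rw [dif_pos h]
  exact h.choose_spec

noncomputable def Gs [Nonempty K] (T Y : Set K) : Set K → List Bool → Set K
  | S, [] => S
  | S, (b :: x) =>
      Gs T Y (S ∩ (if b then Set.Ioi (Jc T (Y ∩ S)).1 else Set.Iio (Jc T (Y ∩ S)).2)) x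

lemma Gs_append [Nonempty K] (T Y : Set K) (x y : List Bool) (S : Set K) :
    Gs T Y S (x ++ y) = Gs T Y (Gs T Y S x) y := by
  induction x generalizing S with
  | nil => rfl
  | cons b x ih => simp only [List.cons_append, Gs]; exact ih _

lemma Gs_subset [Nonempty K] (T Y : Set K) (x : List Bool) (S : Set K) :
    Gs T Y S x ⊆ S := by
  induction x generalizing S with
  | nil => exact subset_rfl
  | cons b x ih => exact (ih _).trans Set.inter_subset_left

/-- The key dispersal lemma: if `T` is scattered, then every nonempty set has a relatively
open piece with no `T`-jump between two of its points. -/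
lemma dispersed [TopologicalSpace K] [OrderTopology K] {T : Set K} (hT : ScatteredSub T)
    {Y : Set K} (hY : Y.Nonempty) :
    ∃ U : Set K, IsOpen U ∧ (Y ∩ U).Nonempty ∧
      ∀ x ∈ Y ∩ U, ∀ y ∈ Y ∩ U, ¬ Jmp T x y := by
  classical
  haveI : Nonempty K := ⟨hY.choose⟩
  by_contra hcon
  push_neg at hcon
  -- every relatively open piece contains a jump with both-sided witnesses
  have H : ∀ S : Set K, IsOpen S → (Y ∩ S).Nonempty → ∃ ab : K × K, P T (Y ∩ S) ab := by
    intro S hS hne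
    obtain ⟨x, hx, y, hy, a, b, h1, h2, h3, h4, h5⟩ := hcon S hS hne
    rcases le_total x y with hxy | hxy
    · exact ⟨(a, b), h2, h4, h5, ⟨x, hx, by rwa [min_eq_left hxy] at h1⟩,
        ⟨y, hy, by rwa [max_eq_right hxy] at h3⟩⟩
    · exact ⟨(a, b), h2, h4, h5, ⟨y, hy, by rwa [min_eq_right hxy] at h1⟩,
        ⟨x, hx, by rwa [max_eq_left hxy] at h3⟩⟩
  have key : ∀ (x : List Bool) (S : Set K), IsOpen S → (Y ∩ S).Nonempty →
      IsOpen (Gs T Y S x) ∧ (Y ∩ Gs T Y S x).Nonempty := by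
    intro x
    induction x with
    | nil => intro S hS hne; exact ⟨hS, hne⟩
    | cons bit x ih =>
      intro S hS hne
      have hP0 : P T (Y ∩ S) (Jc T (Y ∩ S)) := Jc_spec (H S hS hne)
      match bit with
      | false =>
        have hS' : IsOpen (S ∩ Set.Iio (Jc T (Y ∩ S)).2) := hS.inter isOpen_Iio
        have hne' : (Y ∩ (S ∩ Set.Iio (Jc T (Y ∩ S)).2)).Nonempty := by
          obtain ⟨z, ⟨hzY, hzS⟩, hz⟩ := hP0.2.2.2.1
          exact ⟨z, hzY, hzS, lt_of_le_of_lt hz hP0.1⟩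
        simpa only [Gs, if_neg Bool.false_ne_true] using ih _ hS' hne'
      | true =>
        have hS' : IsOpen (S ∩ Set.Ioi (Jc T (Y ∩ S)).1) := hS.inter isOpen_Ioi
        have hne' : (Y ∩ (S ∩ Set.Ioi (Jc T (Y ∩ S)).1)).Nonempty := by
          obtain ⟨w, ⟨hwY, hwS⟩, hw⟩ := hP0.2.2.2.2
          exact ⟨w, hwY, hwS, lt_of_lt_of_le hP0.1 hw⟩
        simpa only [Gs, if_pos] using ih _ hS' hne'
  have hYuniv : (Y ∩ (Set.univ : Set K)).Nonempty := by simpa using hY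
  have hP : ∀ x : List Bool, P T (Y ∩ Gs T Y Set.univ x) (Jc T (Y ∩ Gs T Y Set.univ x)) :=
    fun x => Jc_spec (H _ (key x Set.univ isOpen_univ hYuniv).1 (key x Set.univ isOpen_univ hYuniv).2)
  set A : List Bool → K := fun x => (Jc T (Y ∩ Gs T Y Set.univ x)).1 with hA
  set B : List Bool → K := fun x => (Jc T (Y ∩ Gs T Y Set.univ x)).2 with hB
  have hAB : ∀ x, A x < B x := fun x => (hP x).1
  have hIcc : ∀ x, Set.Icc (A x) (B x) = {A x, B x} := fun x => (hP x).2.1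
  -- descendant inclusion into half-intervals
  have hdownF : ∀ p u, Gs T Y Set.univ (p ++ false :: u) ⊆ Set.Iio (B p) := by
    intro p u
    rw [Gs_append]
    show Gs T Y (Gs T Y Set.univ p) (false :: u) ⊆ _
    simp only [Gs, if_neg Bool.false_ne_true]
    exact (Gs_subset T Y u _).trans Set.inter_subset_right
  have hdownT : ∀ p u, Gs T Y Set.univ (p ++ true :: u) ⊆ Set.Ioi (A p) := by
    intro p u
    rw [Gs_append]
    show Gs T Y (Gs T Y Set.univ p) (true :: u) ⊆ _
    simp only [Gs, if_pos]
    exact (Gs_subset T Y u _).trans Set.inter_subset_right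
  have hL1 : ∀ p u, B (p ++ false :: u) ≤ A p := by
    intro p u
    obtain ⟨w, ⟨hwY, hwG⟩, hw⟩ := (hP (p ++ false :: u)).2.2.2.2
    have hlt : B (p ++ false :: u) < B p := lt_of_le_of_lt hw (hdownF p u hwG)
    exact (jump_le_iff (hAB p) (hIcc p)).2 hlt
  have hL2 : ∀ p v, B p ≤ A (p ++ true :: v) := by
    intro p v
    obtain ⟨z, ⟨hzY, hzG⟩, hz⟩ := (hP (p ++ true :: v)).2.2.2.1
    have hlt : A p < A (p ++ true :: v) := lt_of_lt_of_le (hdownT p v hzG) hz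
    exact (jump_ge_iff (hAB p) (hIcc p)).2 hlt
  have hsep : ∀ x y, TL x y → B x ≤ A y := by
    intro x y h
    rcases h with ⟨p, u, rfl, rfl⟩ | ⟨p, v, rfl, rfl⟩ | ⟨p, u, v, rfl, rfl⟩
    · exact hL1 y u
    · exact hL2 x v
    · exact (hL1 p u).trans ((le_of_lt (hAB p)).trans (hL2 p v))
  -- the chosen endpoints in T
  set e : List Bool → K := fun x => if A x ∈ T then A x else B x with he
  have heT : ∀ x, e x ∈ T := by
    intro x
    by_cases h : A x ∈ T
    · simpa [e, if_pos h] using h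
    · rcases (hP x).2.2.1 with hh | hh
      · exact absurd hh h
      · simpa [e, if_neg h] using hh
  have heAB : ∀ x, A x ≤ e x ∧ e x ≤ B x := by
    intro x
    by_cases h : A x ∈ T
    · simp only [e, if_pos h]
      exact ⟨le_refl _, le_of_lt (hAB x)⟩
    · simp only [e, if_neg h]
      exact ⟨le_of_lt (hAB x), le_refl _⟩
  have hemono : ∀ x y, TL x y → e x ≤ e y := fun x y h =>
    ((heAB x).2.trans (hsep x y h)).trans (heAB y).1
  have hstrict : ∀ x z y, TL x z → TL z y → e x < e y := by
    intro x z y h1 h2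
    calc e x ≤ B x := (heAB x).2
    _ ≤ A z := hsep x z h1
    _ < B z := hAB z
    _ ≤ A y := hsep z y h2
    _ ≤ e y := (heAB y).1
  -- the range of e is a countable dense nontrivial suborder of T
  haveI hcnt : Countable ↥(Set.range e) := (Set.countable_range e).to_subtype
  have hlt0 : TL [false] [] := Or.inl ⟨[], [], rfl, rfl⟩
  haveI hnt : Nontrivial ↥(Set.range e) := by
    obtain ⟨z, hz1, hz2⟩ := TL_dense hlt0
    have hlt : e [false] < e [] := hstrict _ z _ hz1 hz2
    exact ⟨⟨⟨e [false], ⟨_, rfl⟩⟩, ⟨e [], ⟨_, rfl⟩⟩,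
      fun hc => absurd (congrArg Subtype.val hc) (ne_of_lt hlt)⟩⟩
  haveI hdense : DenselyOrdered ↥(Set.range e) := by
    constructor
    rintro ⟨u, x, rfl⟩ ⟨v, y, rfl⟩ h
    have hlt : e x < e y := h
    have hxy : TL x y := by
      rcases TL_total x y with rfl | hh | hh
      · exact absurd hlt (lt_irrefl _)
      · exact hh
      · exact absurd hlt (not_lt.2 (hemono y x hh))
    obtain ⟨z1, hz1a, hz1b⟩ := TL_dense hxy
    obtain ⟨z2, hz2a, hz2b⟩ := TL_dense hz1b
    obtain ⟨z3, hz3a, hz3b⟩ := TL_dense hz2b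
    exact ⟨⟨e z2, ⟨_, rfl⟩⟩, Subtype.mk_lt_mk.2 (hstrict x z1 z2 hz1a hz2a),
      Subtype.mk_lt_mk.2 (hstrict z2 z3 y hz3a hz3b)⟩
  obtain ⟨g⟩ := Order.embedding_from_countable_to_dense (α := ℚ) (β := ↥(Set.range e))
  refine hT ⟨fun q => (g q : K), ?_, ?_⟩
  · intro q1 q2 hq
    exact (Subtype.coe_lt_coe.2 (g.strictMono hq) : (g q1 : K) < g q2)
  · intro q
    obtain ⟨x, hx⟩ := (g q).2
    show ((g q : ↥(Set.range e)) : K) ∈ T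
    rw [← hx]
    exact heT x

end RNaux

/-- If `K` is a zero-dimensional compact line whose set `L` of left- or right-isolated
points is σ-scattered, then `K` is Radon–Nikodým compact. -/
theorem RN_of_sigmaScattered (K : Type*) [LinearOrder K]
    [TopologicalSpace K] [OrderTopology K] [CompactSpace K]
    (hzd : ∀ (x : K) (U : Set K), IsOpen U → x ∈ U → ∃ V : Set K, IsClopen V ∧ x ∈ V ∧ V ⊆ U)
    (L : Set K)
    (hL : L = {x : K | ∃ y : K, y ≠ x ∧ Set.Icc (min x y) (max x y) = {x, y}})
    (hσ : SigmaScatteredSub L) :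
    ∃ d : K → K → ℝ, IsMetricD d ∧ LSCMetric d ∧ Fragments d := by
  classical
  obtain ⟨T, hTsc, hLU⟩ := hσ
  set w : ℕ → ℝ := fun n => ((1 : ℝ) / 2) ^ (n + 1) with hw
  have hwpos : ∀ n, 0 < w n := fun n => by positivity
  set F : K → K → ℕ → ℝ :=
    fun x y n => if RNaux.Jmp (T n) x y then w n else 0 with hF
  have hFnonneg : ∀ x y n, 0 ≤ F x y n := by
    intro x y n
    simp only [F]
    split
    · exact le_of_lt (hwpos n)
    · exact le_refl 0
  have hFle : ∀ x y n, F x y n ≤ w n := by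
    intro x y n
    simp only [F]
    split
    · exact le_refl _
    · exact le_of_lt (hwpos n)
  have hwsum : Summable w := by
    have h := (summable_geometric_of_lt_one (by norm_num : (0:ℝ) ≤ 1/2)
      (by norm_num : (1:ℝ)/2 < 1)).mul_right ((1 : ℝ)/2)
    refine h.congr fun n => ?_
    simp [w, pow_succ]
  have hFsum : ∀ x y, Summable (F x y) :=
    fun x y => Summable.of_nonneg_of_le (hFnonneg x y) (hFle x y) hwsum
  set d : K → K → ℝ := fun x y => ∑' n, F x y n with hd
  have hdnonneg : ∀ x y, 0 ≤ d x y := fun x y => tsum_nonneg (hFnonneg x y)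
  -- jump existence with an endpoint in some T n
  have hjump : ∀ x y : K, x < y → ∃ n, RNaux.Jmp (T n) x y := by
    intro x y hxy
    obtain ⟨a, b, hxa, hab, hby, hic⟩ := RNaux.exists_jump hzd hxy
    have haL : a ∈ L := by
      rw [hL]
      exact ⟨b, ne_of_gt hab, by rwa [min_eq_left (le_of_lt hab), max_eq_right (le_of_lt hab)]⟩
    have : a ∈ ⋃ n, T n := hLU ▸ haL
    obtain ⟨n, hn⟩ := Set.mem_iUnion.1 this
    exact ⟨n, a, b, by rwa [min_eq_left (le_of_lt hxy)], hab,
      by rwa [max_eq_right (le_of_lt hxy)], hic, Or.inl hn⟩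
  have hdpos : ∀ x y : K, x ≠ y → 0 < d x y := by
    intro x y hne
    have : ∃ n, RNaux.Jmp (T n) x y := by
      rcases lt_or_gt_of_ne hne with h | h
      · exact hjump x y h
      · obtain ⟨n, hn⟩ := hjump y x h
        exact ⟨n, RNaux.jmp_comm.1 hn⟩
    obtain ⟨n, hn⟩ := this
    have h1 : F x y n ≤ d x y := Summable.le_tsum (hFsum x y) n (fun j _ => hFnonneg x y j)
    have h2 : F x y n = w n := if_pos hn
    rw [h2] at h1
    exact lt_of_lt_of_le (hwpos n) h1
  refine ⟨d, ⟨hdnonneg, ?_, ?_, ?_⟩, ?_, ?_⟩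
  · -- d x y = 0 ↔ x = y
    intro x y
    constructor
    · intro h
      by_contra hne
      exact absurd h (ne_of_gt (hdpos x y hne))
    · rintro rfl
      have : F x x = fun _ => (0 : ℝ) := funext fun n => if_neg RNaux.not_jmp_self
      simp only [d, this, tsum_zero]
  · -- symmetry
    intro x y
    exact tsum_congr fun n => by simp only [F, RNaux.jmp_comm (x := x) (y := y)]
  · -- triangle
    intro x y z
    have hle : ∀ n, F x z n ≤ F x y n + F y z n := by
      intro n
      by_cases h : RNaux.Jmp (T n) x z
      · rcases RNaux.jmp_split (y := y) h with h' | h'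
        · have : F x z n = F x y n := by simp only [F]; rw [if_pos h, if_pos h']
          rw [this]
          exact le_add_of_nonneg_right (hFnonneg y z n)
        · have : F x z n = F y z n := by simp only [F]; rw [if_pos h, if_pos h']
          rw [this]
          exact le_add_of_nonneg_left (hFnonneg x y n)
      · have : F x z n = 0 := by simp only [F]; rw [if_neg h]
        rw [this]
        exact add_nonneg (hFnonneg x y n) (hFnonneg y z n)
    calc d x z ≤ ∑' n, (F x y n + F y z n) :=
          Summable.tsum_le_tsum hle (hFsum x z) ((hFsum x y).add (hFsum y z))
    _ = d x y + d y z := Summable.tsum_add (hFsum x y) (hFsum y z)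
  · -- lower semicontinuity
    intro r hr
    rw [← isOpen_compl_iff]
    rw [isOpen_iff_forall_mem_open]
    intro p hp
    have hp' : r < d p.1 p.2 := by
      simpa [not_le] using hp
    -- find a finite partial sum exceeding r
    have hfin : ∃ s : Finset ℕ, r < ∑ n ∈ s, F p.1 p.2 n := by
      by_contra hc
      push_neg at hc
      exact absurd (Summable.tsum_le_of_sum_le (hFsum p.1 p.2) hc) (not_le.2 hp')
    obtain ⟨s, hs⟩ := hfin
    set s' : Finset ℕ := s.filter (fun n => RNaux.Jmp (T n) p.1 p.2) with hs'
    have hsum_eq : ∑ n ∈ s', w n = ∑ n ∈ s, F p.1 p.2 n := by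
      rw [hs', Finset.sum_filter]
    have hs2 : r < ∑ n ∈ s', w n := by rw [hsum_eq]; exact hs
    -- open neighborhoods preserving each jump
    have hVn : ∀ n ∈ s', ∃ V : Set (K × K), IsOpen V ∧ p ∈ V ∧
        ∀ q ∈ V, RNaux.Jmp (T n) q.1 q.2 := by
      intro n hn
      have : RNaux.Jmp (T n) p.1 p.2 := (Finset.mem_filter.1 hn).2
      obtain ⟨V, h1, h2, h3⟩ := RNaux.jmp_open (T n) this
      exact ⟨V, h1, h2, h3⟩
    choose V hVopen hVmem hVjmp using hVn
    refine ⟨⋂ n ∈ s'.attach, V n.1 n.2, ?_, ?_, ?_⟩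
    · intro q hq
      simp only [Set.mem_compl_iff, Set.mem_setOf_eq, not_le]
      have hq' : ∀ n (hn : n ∈ s'), q ∈ V n hn := by
        intro n hn
        have := Set.mem_iInter.1 hq ⟨n, hn⟩
        simpa using this
      have hterm : ∀ n ∈ s', F q.1 q.2 n = w n := by
        intro n hn
        exact if_pos (hVjmp n hn q (hq' n hn))
      calc r < ∑ n ∈ s', w n := hs2
      _ = ∑ n ∈ s', F q.1 q.2 n := (Finset.sum_congr rfl hterm).symm
      _ ≤ ∑' n, F q.1 q.2 n :=
          Summable.sum_le_tsum s' (fun n _ => hFnonneg q.1 q.2 n) (hFsum q.1 q.2)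
    · exact isOpen_biInter_finset fun n _ => hVopen n.1 n.2
    · exact Set.mem_iInter.2 fun n => Set.mem_iInter.2 fun _ => hVmem n.1 n.2
  · -- fragmentation
    intro Y hY ε hε
    obtain ⟨N, hN⟩ : ∃ N : ℕ, ((1:ℝ)/2) ^ N < ε :=
      exists_pow_lt_of_lt_one hε (by norm_num)
    have claim : ∀ m : ℕ, ∃ U : Set K, IsOpen U ∧ (Y ∩ U).Nonempty ∧
        ∀ k < m, ∀ x ∈ Y ∩ U, ∀ y ∈ Y ∩ U, ¬ RNaux.Jmp (T k) x y := by
      intro m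
      induction m with
      | zero =>
        exact ⟨Set.univ, isOpen_univ, by simpa using hY, fun k hk => absurd hk (Nat.not_lt_zero k)⟩
      | succ m ih =>
        obtain ⟨U, hUopen, hUne, hUjmp⟩ := ih
        obtain ⟨Vm, hVopen, hVne, hVjmp⟩ := RNaux.dispersed (hTsc m) hUne
        refine ⟨U ∩ Vm, hUopen.inter hVopen, ?_, ?_⟩
        · rwa [← Set.inter_assoc]
        · intro k hk x hx y hy
          rcases Nat.lt_succ_iff_lt_or_eq.1 hk with hk' | rfl
          · exact hUjmp k hk' x ⟨hx.1, hx.2.1⟩ y ⟨hy.1, hy.2.1⟩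
          · have hx' : x ∈ (Y ∩ U) ∩ Vm := ⟨⟨hx.1, hx.2.1⟩, hx.2.2⟩
            have hy' : y ∈ (Y ∩ U) ∩ Vm := ⟨⟨hy.1, hy.2.1⟩, hy.2.2⟩
            exact hVjmp x hx' y hy'
    obtain ⟨U, hUopen, hUne, hUjmp⟩ := claim N
    refine ⟨U, hUopen, hUne, ?_⟩
    intro x hx y hy
    -- bound the metric by the tail of the geometric series
    set g : ℕ → ℝ := fun n => if n < N then 0 else w n with hg
    have hgsum : Summable g := by
      refine Summable.of_nonneg_of_le (fun n => ?_) (fun n => ?_) hwsum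
      · simp only [g]; split
        · exact le_refl 0
        · exact le_of_lt (hwpos n)
      · simp only [g]; split
        · exact le_of_lt (hwpos n)
        · exact le_refl _
    have hFg : ∀ n, F x y n ≤ g n := by
      intro n
      by_cases hn : n < N
      · have : ¬ RNaux.Jmp (T n) x y := hUjmp n hn x hx y hy
        simp only [F, g, if_neg this, if_pos hn, le_refl]
      · simp only [g, if_neg hn]
        exact hFle x y n
    have hdle : d x y ≤ ∑' n, g n := Summable.tsum_le_tsum hFg (hFsum x y) hgsum
    have hgval : ∑' n, g n = ((1:ℝ)/2) ^ N := by
      have h1 : ∑ n ∈ Finset.range N, g n = 0 :=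
        Finset.sum_eq_zero fun n hn => if_pos (Finset.mem_range.1 hn)
      have h2 : (fun n : ℕ => g (n + N)) = fun n : ℕ => w (n + N) := by
        funext n
        exact if_neg (by omega)
      have h3 := Summable.sum_add_tsum_nat_add (f := g) N hgsum
      rw [h1, zero_add] at h3
      rw [← h3, h2]
      have h4 : (fun n : ℕ => w (n + N)) = fun n : ℕ => w n * ((1:ℝ)/2) ^ N := by
        funext n
        simp only [w]
        ring
      rw [h4, tsum_mul_right]
      have h5 : ∑' n, w n = 1 := by
        have := tsum_geometric_two
        calc ∑' n, w n = ∑' n : ℕ, ((1:ℝ)/2) ^ n * ((1:ℝ)/2) := by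
              refine tsum_congr fun n => ?_
              simp [w, pow_succ]
        _ = (∑' n : ℕ, ((1:ℝ)/2) ^ n) * ((1:ℝ)/2) := tsum_mul_right
        _ = 2 * ((1:ℝ)/2) := by rw [tsum_geometric_two]
        _ = 1 := by norm_num
      rw [h5, one_mul]
    calc d x y ≤ ∑' n, g n := hdle
    _ = ((1:ℝ)/2) ^ N := hgval
    _ < ε := hN
end

section
/- Let K be a linear order and (Sₙ)ₙ an increasing sequence of subsets of K such that for every x < y in K there are n and s ∈ Sₙ with x ≤ s < y. Define d(x,y) = 1/n where n = min{k : ∃ s ∈ S_k, min(x,y) ≤ s < max(x,y)} for x ≠ y, and d(x,x) = 0. Then d is an ultrametric: d(x,y) ≤ max{d(x,z), d(z,y)} for all x,y,z ∈ K. -/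
/-- The distance `d(x,y) = 1/n`, `n = min{k : ∃ s ∈ S k, min x y ≤ s < max x y}`,
is an ultrametric. -/
theorem ultrametric_of_separating_sets (K : Type*) [LinearOrder K]
    (S : ℕ → Set K) (hmono : Monotone S) (hS0 : S 0 = ∅)
    (hsep : ∀ x y : K, x < y → ∃ n, ∃ s ∈ S n, x ≤ s ∧ s < y)
    (d : K → K → ℝ)
    (hd0 : ∀ x, d x x = 0)
    (hd : ∀ x y : K, x ≠ y →
      d x y = 1 / ((sInf {k : ℕ | ∃ s ∈ S k, min x y ≤ s ∧ s < max x y} : ℕ) : ℝ)) :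
    ∀ x y z : K, d x y ≤ max (d x z) (d z y) := by
  -- abbreviation for the separating-index sets
  set A : K → K → Set ℕ := fun a b => {k : ℕ | ∃ s ∈ S k, min a b ≤ s ∧ s < max a b} with hA
  have hne : ∀ a b : K, a ≠ b → (A a b).Nonempty := by
    intro a b hab
    obtain ⟨n, s, hs, h1, h2⟩ := hsep (min a b) (max a b) (min_lt_max.2 hab)
    exact ⟨n, s, hs, h1, h2⟩
  have hzero : ∀ a b : K, (0 : ℕ) ∉ A a b := by
    intro a b ⟨s, hs, _⟩
    simp [hS0] at hs
  have hpos : ∀ a b : K, a ≠ b → 0 < sInf (A a b) := by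
    intro a b hab
    rcases Nat.eq_zero_or_pos (sInf (A a b)) with h | h
    · exact absurd (h ▸ Nat.sInf_mem (hne a b hab)) (hzero a b)
    · exact h
  have hnonneg : ∀ a b : K, 0 ≤ d a b := by
    intro a b
    rcases eq_or_ne a b with rfl | hab
    · simp [hd0]
    · rw [hd a b hab]; positivity
  intro x y z
  rcases eq_or_ne x y with rfl | hxy
  · rw [hd0]
    exact le_max_of_le_left (hnonneg x z)
  rcases eq_or_ne z x with rfl | hzx
  · exact le_max_of_le_right le_rfl
  rcases eq_or_ne z y with rfl | hzy
  · exact le_max_of_le_left le_rfl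
  -- the minimal separating index n for (x,y); its witness s separates x,z or z,y
  have hmem := Nat.sInf_mem (hne x y hxy)
  obtain ⟨s, hs, h1, h2⟩ := hmem
  have key : sInf (A x z) ≤ sInf (A x y) ∨ sInf (A z y) ≤ sInf (A x y) := by
    rcases le_or_gt z s with hzs | hsz
    · -- z ≤ s < max x y
      rcases le_total x y with hxy' | hxy'
      · -- max x y = y : s separates z and y
        right
        apply Nat.sInf_le
        refine ⟨s, hs, ?_, ?_⟩
        · calc min z y ≤ z := min_le_left _ _
          _ ≤ s := hzs
        · calc s < max x y := h2
          _ = y := max_eq_right hxy'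
          _ ≤ max z y := le_max_right _ _
      · -- max x y = x : s separates x and z (z ≤ s < x)
        left
        apply Nat.sInf_le
        refine ⟨s, hs, ?_, ?_⟩
        · calc min x z ≤ z := min_le_right _ _
          _ ≤ s := hzs
        · calc s < max x y := h2
          _ = x := max_eq_left hxy'
          _ ≤ max x z := le_max_left _ _
    · -- min x y ≤ s < z
      rcases le_total x y with hxy' | hxy'
      · -- min x y = x : s separates x and z (x ≤ s < z)
        left
        apply Nat.sInf_le
        refine ⟨s, hs, ?_, ?_⟩
        · calc min x z ≤ x := min_le_left _ _
          _ = min x y := (min_eq_left hxy').symm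
          _ ≤ s := h1
        · exact lt_of_lt_of_le hsz (le_max_right _ _)
      · -- min x y = y : s separates z and y (y ≤ s < z)
        right
        apply Nat.sInf_le
        refine ⟨s, hs, ?_, ?_⟩
        · calc min z y ≤ y := min_le_right _ _
          _ = min x y := (min_eq_right hxy').symm
          _ ≤ s := h1
        · exact lt_of_lt_of_le hsz (le_max_left _ _)
  rw [hd x y hxy]
  rcases key with h | h
  · refine le_max_of_le_left ?_
    rw [hd x z (Ne.symm hzx)]
    apply one_div_le_one_div_of_le
    · exact_mod_cast hpos x z (Ne.symm hzx)
    · exact_mod_cast h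
  · refine le_max_of_le_right ?_
    rw [hd z y hzy]
    apply one_div_le_one_div_of_le
    · exact_mod_cast hpos z y hzy
    · exact_mod_cast h
end

section
/- Let K be a compact line, S₁ ⊆ S₂ ⊆ … subsets of right-isolated points of K (each s ∈ Sₙ has an immediate successor s⁺), such that for all x < y there is some n and s ∈ Sₙ with x ≤ s < y. Then the metric d(x,y) = 1/min{k : ∃ s ∈ S_k, min(x,y) ≤ s < max(x,y)} (and d(x,x)=0) is lower semicontinuous on K × K. -/
/-- The distance `d(x,y) = 1/min{k : ∃ s ∈ S k, min x y ≤ s < max x y}` on a compact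
line, with each `S n` consisting of right-isolated points, is lower semicontinuous. -/
theorem lsc_of_separating_sets (K : Type*) [LinearOrder K]
    [TopologicalSpace K] [OrderTopology K] [CompactSpace K]
    (S : ℕ → Set K) (hmono : Monotone S) (hS0 : S 0 = ∅)
    (hiso : ∀ n, ∀ s ∈ S n, ∃ t : K, s < t ∧ Set.Icc s t = {s, t})
    (hsep : ∀ x y : K, x < y → ∃ n, ∃ s ∈ S n, x ≤ s ∧ s < y)
    (d : K → K → ℝ)
    (hd0 : ∀ x, d x x = 0)
    (hd : ∀ x y : K, x ≠ y →
      d x y = 1 / ((sInf {k : ℕ | ∃ s ∈ S k, min x y ≤ s ∧ s < max x y} : ℕ) : ℝ)) :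
    ∀ r : ℝ, 0 < r → IsClosed {p : K × K | d p.1 p.2 ≤ r} := by
  intro r hr
  rw [← isOpen_compl_iff, isOpen_iff_mem_nhds]
  rintro ⟨x, y⟩ hxy
  simp only [Set.mem_compl_iff, Set.mem_setOf_eq, not_le] at hxy
  have hne : x ≠ y := by
    rintro rfl
    rw [hd0] at hxy; linarith
  set A := {k : ℕ | ∃ s ∈ S k, min x y ≤ s ∧ s < max x y} with hA
  have hAne : A.Nonempty := by
    obtain ⟨n, s, hs, h1, h2⟩ := hsep (min x y) (max x y) (min_lt_max.mpr hne)
    exact ⟨n, s, hs, h1, h2⟩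
  obtain ⟨s, hsS, hs1, hs2⟩ := Nat.sInf_mem hAne
  set n := sInf A with hn
  have hn0 : n ≠ 0 := by
    intro h
    rw [h, hS0] at hsS
    exact hsS
  obtain ⟨t, hst, hIcc⟩ := hiso n s hsS
  have hdxy : d x y = 1 / (n : ℝ) := hd x y hne
  rw [hdxy] at hxy
  -- key: any pair u < t, s < v has distance > r
  have key : ∀ u v : K, u < t → s < v → r < d u v := by
    intro u v hu hv
    have huv : u ≤ s := by
      by_contra h
      push_neg at h
      have hmem : u ∈ Set.Icc s t := ⟨h.le, hu.le⟩
      rw [hIcc] at hmem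
      rcases hmem with h' | h'
      · exact absurd h' (ne_of_gt h)
      · exact absurd h' (ne_of_lt hu)
    have huv' : u < v := lt_of_le_of_lt huv hv
    rw [hd u v huv'.ne]
    set B := {k : ℕ | ∃ s ∈ S k, min u v ≤ s ∧ s < max u v} with hB
    have hBmem : n ∈ B :=
      ⟨s, hsS, by rw [min_eq_left huv'.le]; exact huv, by rw [max_eq_right huv'.le]; exact hv⟩
    have hle : sInf B ≤ n := Nat.sInf_le hBmem
    have hB0 : sInf B ≠ 0 := by
      intro h
      have := Nat.sInf_mem ⟨n, hBmem⟩
      rw [h] at this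
      obtain ⟨w, hw, -⟩ := this
      rw [hS0] at hw; exact hw
    have h1 : (1 : ℝ) ≤ ((sInf B : ℕ) : ℝ) := by exact_mod_cast Nat.one_le_iff_ne_zero.mpr hB0
    have h2 : ((sInf B : ℕ) : ℝ) ≤ (n : ℝ) := by exact_mod_cast hle
    calc r < 1 / (n : ℝ) := hxy
      _ ≤ 1 / ((sInf B : ℕ) : ℝ) := one_div_le_one_div_of_le (by linarith) h2
  rcases hne.lt_or_gt with hlt | hlt
  · -- x < y : min = x, max = y
    rw [min_eq_left hlt.le] at hs1
    rw [max_eq_right hlt.le] at hs2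
    have hmem : Set.Iio t ×ˢ Set.Ioi s ∈ nhds (x, y) :=
      prod_mem_nhds (isOpen_Iio.mem_nhds (lt_of_le_of_lt hs1 hst))
        (isOpen_Ioi.mem_nhds hs2)
    filter_upwards [hmem]
    rintro ⟨u, v⟩ ⟨hu, hv⟩
    simp only [Set.mem_compl_iff, Set.mem_setOf_eq, not_le]
    exact key u v hu hv
  · -- y < x : min = y, max = x
    rw [min_eq_right hlt.le] at hs1
    rw [max_eq_left hlt.le] at hs2
    have hmem : Set.Ioi s ×ˢ Set.Iio t ∈ nhds (x, y) :=
      prod_mem_nhds (isOpen_Ioi.mem_nhds hs2)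
        (isOpen_Iio.mem_nhds (lt_of_le_of_lt hs1 hst))
    filter_upwards [hmem]
    rintro ⟨u, v⟩ ⟨hu, hv⟩
    simp only [Set.mem_compl_iff, Set.mem_setOf_eq, not_le]
    have h := key v u hv hu
    have hvu : v < u := by
      have hvs : v ≤ s := by
        by_contra hcon
        push_neg at hcon
        have hmem2 : v ∈ Set.Icc s t := ⟨hcon.le, hv.le⟩
        rw [hIcc] at hmem2
        rcases hmem2 with h' | h'
        · exact absurd h' (ne_of_gt hcon)
        · exact absurd h' (ne_of_lt hv)
      exact lt_of_le_of_lt hvs hu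
    rw [hd u v hvu.ne']
    rw [hd v u hvu.ne] at h
    rwa [min_comm v u, max_comm v u] at h
end

section
/- Let K be a compact line fragmented by a metric d, let n ≥ 1, let 𝓕ₙ be a maximal family of pairwise disjoint closed infinite intervals of K each of d-diameter less than 1/n, and let Kₙ = K \ ⋃{(a,b) : [a,b] ∈ 𝓕ₙ}. Then Kₙ is a compact zero-dimensional subspace of K. -/
/-- A densely-ordered closed interval with distinct endpoints is infinite. -/
lemma dense_Icc_infinite {K : Type*} [LinearOrder K] {a b : K} (h : a < b)
    (hd : ∀ c e : K, a ≤ c → e ≤ b → c < e → (Set.Ioo c e).Nonempty) :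
    (Set.Icc a b).Infinite := by
  have step : ∀ c : {c : K // a ≤ c ∧ c < b}, ∃ e : K, c.1 < e ∧ a ≤ e ∧ e < b := by
    rintro ⟨c, hac, hcb⟩
    obtain ⟨e, he⟩ := hd c b hac le_rfl hcb
    exact ⟨e, he.1, hac.trans he.1.le, he.2⟩
  choose g hg1 hg2 hg3 using step
  let G : {c : K // a ≤ c ∧ c < b} → {c : K // a ≤ c ∧ c < b} :=
    fun c => ⟨g c, hg2 c, hg3 c⟩
  let f : ℕ → {c : K // a ≤ c ∧ c < b} := fun k => G^[k] ⟨a, le_rfl, h⟩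
  have hmono : StrictMono fun k => (f k).1 := by
    apply strictMono_nat_of_lt_succ
    intro k
    have hstep : f (k + 1) = G (f k) := Function.iterate_succ_apply' G k _
    rw [hstep]
    exact hg1 (f k)
  exact Set.infinite_of_injective_forall_mem hmono.injective
    (fun k => ⟨(f k).2.1, (f k).2.2.le⟩)

/-- The jump lemma: between any two points of `Kn` there is a jump of `Kn`. -/
lemma Kn_jump (K : Type*) [LinearOrder K]
    [TopologicalSpace K] [OrderTopology K] [CompactSpace K]
    (d : K → K → ℝ) (hfrag : Fragments d)
    (n : ℕ) (hn : 1 ≤ n)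
    (F : Set (K × K))
    (hlt : ∀ p ∈ F, p.1 < p.2)
    (hinf : ∀ p ∈ F, (Set.Icc p.1 p.2).Infinite)
    (hdisj : ∀ p ∈ F, ∀ q ∈ F, p ≠ q → Disjoint (Set.Icc p.1 p.2) (Set.Icc q.1 q.2))
    (hmax : ∀ a b : K, a < b → (Set.Icc a b).Infinite →
      (∀ x ∈ Set.Icc a b, ∀ y ∈ Set.Icc a b, d x y < 1 / n) →
      (∀ p ∈ F, Disjoint (Set.Icc p.1 p.2) (Set.Icc a b)) → (a, b) ∈ F)
    (Kn : Set K) (hKn : Kn = Set.univ \ ⋃ p ∈ F, Set.Ioo p.1 p.2)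
    (x y : K) (hx : x ∈ Kn) (hy : y ∈ Kn) (hxy : x < y) :
    ∃ a b : K, a ∈ Kn ∧ b ∈ Kn ∧ x ≤ a ∧ a < b ∧ b ≤ y ∧
      ∀ z ∈ Set.Ioo a b, z ∉ Kn := by
  -- membership facts
  have hKnmem : ∀ z : K, z ∈ Kn ↔ ∀ p ∈ F, z ∉ Set.Ioo p.1 p.2 := by
    intro z
    constructor
    · intro h p hp hzp
      rw [hKn] at h
      exact h.2 (Set.mem_biUnion hp hzp)
    · intro h
      rw [hKn]
      refine ⟨Set.mem_univ z, fun hz => ?_⟩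
      simp only [Set.mem_iUnion] at hz
      obtain ⟨p, hp, hzp⟩ := hz
      exact h p hp hzp
  have hend : ∀ p ∈ F, p.1 ∈ Kn ∧ p.2 ∈ Kn := by
    intro p hp
    constructor <;> rw [hKnmem] <;> intro q hq hzq
    · rcases eq_or_ne q p with rfl | hne
      · exact lt_irrefl _ hzq.1
      · exact (hdisj q hq p hp hne).le_bot
          ⟨Set.mem_Icc.2 ⟨hzq.1.le, hzq.2.le⟩, Set.mem_Icc.2 ⟨le_rfl, (hlt p hp).le⟩⟩
    · rcases eq_or_ne q p with rfl | hne
      · exact lt_irrefl _ hzq.2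
      · exact (hdisj q hq p hp hne).le_bot
          ⟨Set.mem_Icc.2 ⟨hzq.1.le, hzq.2.le⟩, Set.mem_Icc.2 ⟨(hlt p hp).le, le_rfl⟩⟩
  by_contra hcon
  push_neg at hcon
  -- hcon : every candidate jump has a point of Kn inside
  have hcon' : ∀ a b : K, a ∈ Kn → b ∈ Kn → x ≤ a → a < b → b ≤ y →
      ∃ z ∈ Set.Ioo a b, z ∈ Kn := by
    intro a b ha hb hxa hab hby
    obtain ⟨z, hz1, hz2⟩ := hcon a b ha hb hxa hab hby
    exact ⟨z, hz1, hz2⟩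
  -- Step A: (x, y) ⊆ Kn
  have hsub : Set.Ioo x y ⊆ Kn := by
    intro w hw
    by_contra hwK
    have hwU : w ∈ ⋃ p ∈ F, Set.Ioo p.1 p.2 := by
      by_contra h'
      exact hwK (by rw [hKn]; exact ⟨Set.mem_univ w, h'⟩)
    simp only [Set.mem_iUnion] at hwU
    obtain ⟨p, hp, hwp⟩ := hwU
    have hxp : x ≤ p.1 := by
      by_contra h'
      exact ((hKnmem x).1 hx p hp) ⟨not_le.mp h', hw.1.trans hwp.2⟩
    have hpy : p.2 ≤ y := by
      by_contra h'
      exact ((hKnmem y).1 hy p hp) ⟨hwp.1.trans hw.2, not_le.mp h'⟩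
    obtain ⟨z, hz, hzK⟩ := hcon' p.1 p.2 (hend p hp).1 (hend p hp).2 hxp (hlt p hp) hpy
    exact ((hKnmem z).1 hzK p hp) hz
  -- Step B: [x, y] is densely ordered
  have hdense : ∀ c e : K, x ≤ c → e ≤ y → c < e → (Set.Ioo c e).Nonempty := by
    intro c e hxc hey hce
    have hcK : c ∈ Kn := by
      rcases eq_or_lt_of_le hxc with rfl | h'
      · exact hx
      · exact hsub ⟨h', hce.trans_le hey⟩
    have heK : e ∈ Kn := by
      rcases eq_or_lt_of_le hey with rfl | h'
      · exact hy
      · exact hsub ⟨hxc.trans_lt hce, h'⟩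
    obtain ⟨z, hz, _⟩ := hcon' c e hcK heK hxc hce hey
    exact ⟨z, hz⟩
  -- Step C: fragmentability gives a small infinite interval in (x, y)
  have hnpos : (0 : ℝ) < 1 / n := by
    apply div_pos one_pos
    exact_mod_cast Nat.lt_of_lt_of_le Nat.zero_lt_one hn
  obtain ⟨U, hUopen, ⟨z, hz⟩, hsmall⟩ :=
    hfrag (Set.Ioo x y) (hdense x y le_rfl le_rfl hxy) (1 / n) hnpos
  have hzx : x < z := hz.1.1
  have hzy : z < y := hz.1.2
  obtain ⟨l, u, hzlu, hluU⟩ := (mem_nhds_iff_exists_Ioo_subset' ⟨x, hzx⟩ ⟨y, hzy⟩).1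
    (hUopen.mem_nhds hz.2)
  set l' : K := max l x with hl'
  set u' : K := min u y with hu'
  have hl'z : l' < z := max_lt hzlu.1 hzx
  have hzu' : z < u' := lt_min hzlu.2 hzy
  obtain ⟨a, ha⟩ := hdense l' z (le_max_right l x) hzy.le hl'z
  obtain ⟨b, hb⟩ := hdense z u' hzx.le (min_le_right u y) hzu'
  have hab : a < b := ha.2.trans hb.1
  have hxa : x < a := lt_of_le_of_lt (le_max_right l x) ha.1
  have hby : b < y := lt_of_lt_of_le hb.2 (min_le_right u y)
  have hIcc : Set.Icc a b ⊆ Set.Ioo x y ∩ U := by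
    intro w hw
    have hw1 : x < w := hxa.trans_le hw.1
    have hw2 : w < y := lt_of_le_of_lt hw.2 hby
    refine ⟨⟨hw1, hw2⟩, hluU ⟨?_, ?_⟩⟩
    · exact lt_of_le_of_lt (le_max_left l x) (ha.1.trans_le hw.1)
    · exact lt_of_le_of_lt hw.2 (hb.2.trans_le (min_le_left u y))
  have habInf : (Set.Icc a b).Infinite := by
    apply dense_Icc_infinite hab
    intro c e hac heb hce
    exact hdense c e (hxa.le.trans hac) (heb.trans hby.le) hce
  have habDiam : ∀ w₁ ∈ Set.Icc a b, ∀ w₂ ∈ Set.Icc a b, d w₁ w₂ < 1 / n := by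
    intro w₁ h₁ w₂ h₂
    exact hsmall w₁ (hIcc h₁) w₂ (hIcc h₂)
  have habDisj : ∀ p ∈ F, Disjoint (Set.Icc p.1 p.2) (Set.Icc a b) := by
    intro p hp
    rw [Set.disjoint_left]
    intro w hwp hwab
    have hwxy : w ∈ Set.Ioo x y := (hIcc hwab).1
    have hwK : w ∈ Kn := hsub hwxy
    have hwnot : w ∉ Set.Ioo p.1 p.2 := (hKnmem w).1 hwK p hp
    -- Ioo p.1 p.2 is nonempty
    obtain ⟨t, ht⟩ : (Set.Ioo p.1 p.2).Nonempty := by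
      obtain ⟨t, ht⟩ := ((hinf p hp).diff
        (Set.toFinite ({p.1, p.2} : Set K))).nonempty
      refine ⟨t, lt_of_le_of_ne ht.1.1 ?_, lt_of_le_of_ne ht.1.2 ?_⟩
      · exact fun h => ht.2 (by simp [← h])
      · exact fun h => ht.2 (by simp [h])
    have : w = p.1 ∨ w = p.2 := by
      rcases lt_or_eq_of_le hwp.1 with h1 | h1
      · rcases lt_or_eq_of_le hwp.2 with h2 | h2
        · exact absurd ⟨h1, h2⟩ hwnot
        · exact Or.inr h2
      · exact Or.inl h1.symm
    rcases this with rfl | rfl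
    · -- w = p.1 ∈ (x, y); then Ioo p ⊆ (x, y) ⊆ Kn, contradiction
      have hpy : p.2 ≤ y := by
        by_contra h'
        exact ((hKnmem y).1 hy p hp) ⟨hwxy.2, not_le.mp h'⟩
      have htK : t ∈ Kn := hsub ⟨hwxy.1.trans ht.1, ht.2.trans_le hpy⟩
      exact ((hKnmem t).1 htK p hp) ht
    · have hxp : x ≤ p.1 := by
        by_contra h'
        exact ((hKnmem x).1 hx p hp) ⟨not_le.mp h', hwxy.1⟩
      have htK : t ∈ Kn := hsub ⟨hxp.trans_lt ht.1, ht.2.trans hwxy.2⟩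
      exact ((hKnmem t).1 htK p hp) ht
  have habF : (a, b) ∈ F := hmax a b hab habInf habDiam habDisj
  obtain ⟨t, ht⟩ := hdense a b hxa.le hby.le hab
  have htK : t ∈ Kn := hsub ⟨hxa.trans ht.1, ht.2.trans hby⟩
  exact ((hKnmem t).1 htK (a, b) habF) ht

/-- If `𝓕` is a maximal family of pairwise disjoint closed infinite intervals of
`d`-diameter `< 1/n` in a fragmentable compact line `K`, then
`Kₙ = K \ ⋃ {(a,b) : [a,b] ∈ 𝓕}` is compact and zero-dimensional. -/
theorem Kn_compact_zeroDim (K : Type*) [LinearOrder K]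
    [TopologicalSpace K] [OrderTopology K] [CompactSpace K]
    (d : K → K → ℝ) (hd : IsMetricD d) (hfrag : Fragments d)
    (n : ℕ) (hn : 1 ≤ n)
    (F : Set (K × K))
    (hlt : ∀ p ∈ F, p.1 < p.2)
    (hinf : ∀ p ∈ F, (Set.Icc p.1 p.2).Infinite)
    (hdiam : ∀ p ∈ F, ∀ x ∈ Set.Icc p.1 p.2, ∀ y ∈ Set.Icc p.1 p.2, d x y < 1 / n)
    (hdisj : ∀ p ∈ F, ∀ q ∈ F, p ≠ q → Disjoint (Set.Icc p.1 p.2) (Set.Icc q.1 q.2))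
    (hmax : ∀ a b : K, a < b → (Set.Icc a b).Infinite →
      (∀ x ∈ Set.Icc a b, ∀ y ∈ Set.Icc a b, d x y < 1 / n) →
      (∀ p ∈ F, Disjoint (Set.Icc p.1 p.2) (Set.Icc a b)) → (a, b) ∈ F)
    (Kn : Set K) (hKn : Kn = Set.univ \ ⋃ p ∈ F, Set.Ioo p.1 p.2) :
    IsCompact Kn ∧ ∃ B : Set (Set ↥Kn),
      TopologicalSpace.IsTopologicalBasis B ∧ ∀ U ∈ B, IsClopen U := by
  have hopen : IsOpen (⋃ p ∈ F, Set.Ioo p.1 p.2) :=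
    isOpen_biUnion fun p _ => isOpen_Ioo
  have hclosed : IsClosed Kn := by
    rw [hKn, ← Set.compl_eq_univ_diff]
    exact hopen.isClosed_compl
  have hcomp : IsCompact Kn := hclosed.isCompact
  refine ⟨hcomp, ?_⟩
  haveI : CompactSpace ↥Kn := isCompact_iff_compactSpace.mp hcomp
  -- key separation: for x < y in Kn there are complementary clopen-like opens
  have key : ∀ x y : ↥Kn, (x : K) < (y : K) →
      ∃ u v : Set ↥Kn, IsOpen u ∧ IsOpen v ∧ x ∈ u ∧ y ∈ v ∧
        (Set.univ : Set ↥Kn) ⊆ u ∪ v ∧ Disjoint u v := by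
    intro x y hxy
    obtain ⟨a, b, _, _, hxa, hab, hby, hjump⟩ :=
      Kn_jump K d hfrag n hn F hlt hinf hdisj hmax Kn hKn x y x.2 y.2 hxy
    refine ⟨Subtype.val ⁻¹' Set.Iio b, Subtype.val ⁻¹' Set.Ioi a,
      isOpen_Iio.preimage continuous_subtype_val,
      isOpen_Ioi.preimage continuous_subtype_val,
      lt_of_le_of_lt hxa hab, lt_of_lt_of_le hab hby, ?_, ?_⟩
    · intro z _
      rcases lt_or_ge (z : K) b with h | h
      · exact Or.inl h
      · exact Or.inr (hab.trans_le h)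
    · rw [Set.disjoint_left]
      intro z hz1 hz2
      exact hjump (z : K) ⟨hz2, hz1⟩ z.2
  haveI : TotallySeparatedSpace ↥Kn := by
    constructor
    intro x _ y _ hne
    rcases lt_trichotomy (x : K) (y : K) with h | h | h
    · exact key x y h
    · exact absurd (Subtype.ext h) hne
    · obtain ⟨u, v, hu, hv, hyu, hxv, hcover, hdis⟩ := key y x h
      exact ⟨v, u, hv, hu, hxv, hyu, fun z hz => (hcover hz).symm, hdis.symm⟩
  exact ⟨{s : Set ↥Kn | IsClopen s}, loc_compact_Haus_tot_disc_of_zero_dim,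
    fun U hU => hU⟩
end

section
/- A countable product of Radon-Nikodým compact spaces is Radon-Nikodým compact. -/
/-- `X` is Radon–Nikodým compact: some lower semicontinuous metric fragments it. -/
def IsRNCompact (X : Type*) [TopologicalSpace X] : Prop :=
  ∃ d : X → X → ℝ, IsMetricD d ∧ LSCMetric d ∧ Fragments d

/-- Sublevel sets of a nonnegative LSC metric are closed for every real `r`. -/
lemma lsc_closed_all {X : Type*} [TopologicalSpace X] {d : X → X → ℝ}
    (hnn : ∀ x y, 0 ≤ d x y) (hlsc : LSCMetric d) (r : ℝ) :
    IsClosed {p : X × X | d p.1 p.2 ≤ r} := by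
  rcases lt_trichotomy r 0 with hr | hr | hr
  · convert isClosed_empty
    ext p
    simp only [Set.mem_setOf_eq, Set.mem_empty_iff_false, iff_false, not_le]
    exact lt_of_lt_of_le hr (hnn _ _)
  · subst hr
    have : {p : X × X | d p.1 p.2 ≤ 0} = ⋂ k : ℕ, {p : X × X | d p.1 p.2 ≤ 1 / (k + 1)} := by
      ext p
      simp only [Set.mem_setOf_eq, Set.mem_iInter]
      constructor
      · intro hp k
        exact hp.trans (by positivity)
      · intro hp
        by_contra hc
        push_neg at hc
        obtain ⟨k, hk⟩ := exists_nat_one_div_lt hc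
        exact absurd (hp k) (not_le.2 (by exact_mod_cast hk))
    rw [this]
    exact isClosed_iInter fun k => hlsc _ (by positivity)
  · exact hlsc r hr

set_option maxHeartbeats 1000000 in
/-- A countable product of Radon–Nikodým compact spaces is Radon–Nikodým compact. -/
theorem isRNCompact_pi (Y : ℕ → Type*) [∀ n, TopologicalSpace (Y n)]
    [∀ n, CompactSpace (Y n)] [∀ n, T2Space (Y n)]
    (h : ∀ n, IsRNCompact (Y n)) : IsRNCompact (∀ n, Y n) := by
  choose d hmet hlsc hfrag using h
  obtain ⟨hnn, hzero, hsymm, htri⟩ :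
      (∀ n, ∀ x y, 0 ≤ d n x y) ∧ (∀ n, ∀ x y, d n x y = 0 ↔ x = y) ∧
      (∀ n, ∀ x y, d n x y = d n y x) ∧ (∀ n, ∀ x y z, d n x z ≤ d n x y + d n y z) :=
    ⟨fun n => (hmet n).1, fun n => (hmet n).2.1, fun n => (hmet n).2.2.1,
      fun n => (hmet n).2.2.2⟩
  set X := ∀ n, Y n with hX
  -- the truncated coordinate distances
  set e : ℕ → X → X → ℝ := fun n x y => min 1 (d n (x n) (y n)) with he
  have henn : ∀ n x y, 0 ≤ e n x y := fun n x y => le_min zero_le_one (hnn n _ _)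
  have hele : ∀ n x y, e n x y ≤ 1 := fun n x y => min_le_left _ _
  set D : X → X → ℝ := fun x y => ∑' n, (1 / 2 : ℝ) ^ n * e n x y with hD
  have hsummable : ∀ x y, Summable fun n => (1 / 2 : ℝ) ^ n * e n x y := by
    intro x y
    apply Summable.of_nonneg_of_le
      (fun n => mul_nonneg (by positivity) (henn n x y)) (fun n => ?_) summable_geometric_two
    calc (1 / 2 : ℝ) ^ n * e n x y ≤ (1 / 2 : ℝ) ^ n * 1 := by
          apply mul_le_mul_of_nonneg_left (hele n x y) (by positivity)
      _ = (1 / 2 : ℝ) ^ n := mul_one _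
  have hDnn : ∀ x y, 0 ≤ D x y := fun x y =>
    tsum_nonneg fun n => mul_nonneg (by positivity) (henn n x y)
  refine ⟨D, ⟨hDnn, ?_, ?_, ?_⟩, ?_, ?_⟩
  · -- identity of indiscernibles
    intro x y
    constructor
    · intro h0
      funext n
      have hterm : (1 / 2 : ℝ) ^ n * e n x y ≤ D x y :=
        Summable.le_tsum (hsummable x y) n fun m _ => mul_nonneg (pow_nonneg (by norm_num) m) (henn m x y)
      rw [h0] at hterm
      have : (1 / 2 : ℝ) ^ n * e n x y = 0 :=
        le_antisymm hterm (mul_nonneg (by positivity) (henn n x y))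
      have he0 : e n x y = 0 := by
        have hpow : (0 : ℝ) < (1 / 2 : ℝ) ^ n := by positivity
        nlinarith [henn n x y]
      have : d n (x n) (y n) = 0 := by
        rcases min_eq_iff.mp he0 with ⟨h1, _⟩ | ⟨h1, _⟩
        · exact absurd h1 one_ne_zero
        · exact h1
      exact (hzero n _ _).1 this
    · intro hxy
      subst hxy
      have : ∀ n, (1 / 2 : ℝ) ^ n * e n x x = 0 := by
        intro n
        have : d n (x n) (x n) = 0 := (hzero n _ _).2 rfl
        simp [he, this]
      have h2 : D x x = ∑' _ : ℕ, (0 : ℝ) := tsum_congr this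
      rw [h2, tsum_zero]
  · -- symmetry
    intro x y
    simp only [hD, he]
    congr 1
    funext n
    rw [hsymm n]
  · -- triangle inequality
    intro x y z
    have hterm : ∀ n, (1 / 2 : ℝ) ^ n * e n x z ≤
        (1 / 2 : ℝ) ^ n * e n x y + (1 / 2 : ℝ) ^ n * e n y z := by
      intro n
      rw [← mul_add]
      apply mul_le_mul_of_nonneg_left _ (by positivity)
      rcases le_or_gt 1 (d n (x n) (y n)) with h1 | h1
      · calc e n x z ≤ 1 := hele n x z
          _ ≤ e n x y + e n y z := by
              have : e n x y = 1 := min_eq_left h1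
              rw [this]; linarith [henn n y z]
      · rcases le_or_gt 1 (d n (y n) (z n)) with h2 | h2
        · calc e n x z ≤ 1 := hele n x z
            _ ≤ e n x y + e n y z := by
                have : e n y z = 1 := min_eq_left h2
                rw [this]; linarith [henn n x y]
        · calc e n x z ≤ d n (x n) (z n) := min_le_right _ _
            _ ≤ d n (x n) (y n) + d n (y n) (z n) := htri n _ _ _
            _ = e n x y + e n y z := by
                rw [he]; simp only
                rw [min_eq_right h1.le, min_eq_right h2.le]
    calc D x z ≤ ∑' n, ((1 / 2 : ℝ) ^ n * e n x y + (1 / 2 : ℝ) ^ n * e n y z) :=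
          Summable.tsum_le_tsum hterm (hsummable x z) ((hsummable x y).add (hsummable y z))
      _ = D x y + D y z := Summable.tsum_add (hsummable x y) (hsummable y z)
  · -- lower semicontinuity
    intro r _
    -- each partial sum is lower semicontinuous
    have hF : ∀ n : ℕ, LowerSemicontinuous
        (fun p : X × X => (1 / 2 : ℝ) ^ n * e n p.1 p.2) := by
      intro n
      rw [lowerSemicontinuous_iff_isClosed_preimage]
      intro y
      have hpow : (0 : ℝ) < (1 / 2 : ℝ) ^ n := by positivity
      have hset : (fun p : X × X => (1 / 2 : ℝ) ^ n * e n p.1 p.2) ⁻¹' Set.Iic y =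
          {p : X × X | e n p.1 p.2 ≤ y / (1 / 2) ^ n} := by
        ext p
        simp only [Set.mem_preimage, Set.mem_Iic, Set.mem_setOf_eq]
        rw [le_div_iff₀ hpow, mul_comm]
      rw [hset]
      set c := y / (1 / 2 : ℝ) ^ n with hc
      rcases le_or_gt 1 c with h1 | h1
      · convert isClosed_univ
        ext p
        simp only [Set.mem_setOf_eq, Set.mem_univ, iff_true]
        exact (hele n p.1 p.2).trans h1
      · have hset2 : {p : X × X | e n p.1 p.2 ≤ c} =
            (fun p : X × X => (p.1 n, p.2 n)) ⁻¹' {q : Y n × Y n | d n q.1 q.2 ≤ c} := by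
          ext p
          simp only [Set.mem_setOf_eq, Set.mem_preimage, he]
          constructor
          · intro hp
            rcases le_total 1 (d n (p.1 n) (p.2 n)) with hle | hle
            · rw [min_eq_left hle] at hp; linarith
            · rwa [min_eq_right hle] at hp
          · intro hp
            exact (min_le_right _ _).trans hp
        rw [hset2]
        apply IsClosed.preimage
        · exact Continuous.prodMk ((continuous_apply n).comp continuous_fst)
            ((continuous_apply n).comp continuous_snd)
        · exact lsc_closed_all (hnn n) (hlsc n) c
    have hpartial : ∀ N : ℕ, LowerSemicontinuous
        (fun p : X × X => ∑ n ∈ Finset.range N, (1 / 2 : ℝ) ^ n * e n p.1 p.2) := by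
      intro N
      exact lowerSemicontinuous_sum fun n _ => hF n
    have hkey : {p : X × X | D p.1 p.2 ≤ r} =
        ⋂ N : ℕ, {p : X × X | ∑ n ∈ Finset.range N, (1 / 2 : ℝ) ^ n * e n p.1 p.2 ≤ r} := by
      ext p
      simp only [Set.mem_setOf_eq, Set.mem_iInter]
      constructor
      · intro hp N
        calc ∑ n ∈ Finset.range N, (1 / 2 : ℝ) ^ n * e n p.1 p.2 ≤ D p.1 p.2 :=
            Summable.sum_le_tsum _ (fun n _ => mul_nonneg (by positivity) (henn n _ _))
              (hsummable p.1 p.2)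
          _ ≤ r := hp
      · intro hp
        have htend := (hsummable p.1 p.2).hasSum.tendsto_sum_nat
        exact le_of_tendsto htend (Filter.Eventually.of_forall hp)
    rw [hkey]
    apply isClosed_iInter
    intro N
    exact lowerSemicontinuous_iff_isClosed_preimage.1 (hpartial N) r
  · -- fragmentation
    -- auxiliary: fragment finitely many coordinates simultaneously
    have haux : ∀ s : Finset ℕ, ∀ A : Set X, A.Nonempty → ∀ ε : ℝ, 0 < ε →
        ∃ U : Set X, IsOpen U ∧ (A ∩ U).Nonempty ∧
          ∀ x ∈ A ∩ U, ∀ y ∈ A ∩ U, ∀ n ∈ s, d n (x n) (y n) < ε := by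
      intro s
      induction s using Finset.induction_on with
      | empty =>
        intro A hA ε hε
        exact ⟨Set.univ, isOpen_univ, by simpa using hA, fun x _ y _ n hn => absurd hn (by simp)⟩
      | @insert a s ha ih =>
        intro A hA ε hε
        obtain ⟨U', hU'open, hU'ne, hU'⟩ := ih A hA ε hε
        have himg : ((fun x : X => x a) '' (A ∩ U')).Nonempty := hU'ne.image _
        obtain ⟨V, hVopen, hVne, hV⟩ := hfrag a _ himg ε hε
        refine ⟨U' ∩ (fun x : X => x a) ⁻¹' V,
          hU'open.inter (hVopen.preimage (continuous_apply a)), ?_, ?_⟩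
        · obtain ⟨z, hz1, hz2⟩ := hVne
          obtain ⟨x, hx, hxz⟩ := hz1
          refine ⟨x, hx.1, hx.2, ?_⟩
          show x a ∈ V
          rw [show x a = z from hxz]
          exact hz2
        · intro x hx y hy n hn
          have hxU' : x ∈ A ∩ U' := ⟨hx.1, hx.2.1⟩
          have hyU' : y ∈ A ∩ U' := ⟨hy.1, hy.2.1⟩
          rcases Finset.mem_insert.mp hn with rfl | hn'
          · apply hV
            · exact ⟨⟨x, hxU', rfl⟩, hx.2.2⟩
            · exact ⟨⟨y, hyU', rfl⟩, hy.2.2⟩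
          · exact hU' x hxU' y hyU' n hn'
    intro A hA ε hε
    -- choose N with tail small
    obtain ⟨N, hN⟩ := exists_pow_lt_of_lt_one (show (0:ℝ) < ε / 4 by linarith)
      (show (1/2 : ℝ) < 1 by norm_num)
    obtain ⟨U, hUopen, hUne, hU⟩ := haux (Finset.range N) A hA (ε / 8) (by linarith)
    refine ⟨U, hUopen, hUne, ?_⟩
    intro x hx y hy
    have hsplit := Summable.sum_add_tsum_nat_add (f := fun n => (1 / 2 : ℝ) ^ n * e n x y) N (hsummable x y)
    have hhead : ∑ n ∈ Finset.range N, (1 / 2 : ℝ) ^ n * e n x y ≤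
        ∑ n ∈ Finset.range N, (1 / 2 : ℝ) ^ n * (ε / 8) := by
      apply Finset.sum_le_sum
      intro n hn
      apply mul_le_mul_of_nonneg_left _ (by positivity)
      calc e n x y ≤ d n (x n) (y n) := min_le_right _ _
        _ ≤ ε / 8 := (hU x hx y hy n hn).le
    have hhead2 : ∑ n ∈ Finset.range N, (1 / 2 : ℝ) ^ n * (ε / 8) ≤ 2 * (ε / 8) := by
      rw [← Finset.sum_mul]
      apply mul_le_mul_of_nonneg_right _ (by linarith)
      calc ∑ n ∈ Finset.range N, (1 / 2 : ℝ) ^ n ≤ ∑' n : ℕ, (1 / 2 : ℝ) ^ n :=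
          Summable.sum_le_tsum _ (fun n _ => by positivity) summable_geometric_two
        _ = 2 := tsum_geometric_two
    have hbnd : ∀ n : ℕ, (1 / 2 : ℝ) ^ (n + N) * e (n + N) x y ≤ (1 / 2 : ℝ) ^ N * (1 / 2) ^ n := by
      intro n
      calc (1 / 2 : ℝ) ^ (n + N) * e (n + N) x y ≤ (1 / 2 : ℝ) ^ (n + N) * 1 :=
          mul_le_mul_of_nonneg_left (hele _ x y) (by positivity)
        _ = (1 / 2 : ℝ) ^ N * (1 / 2) ^ n := by rw [mul_one, pow_add, mul_comm]
    have hs2 : Summable (fun n : ℕ => (1 / 2 : ℝ) ^ (n + N) * e (n + N) x y) :=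
      Summable.of_nonneg_of_le (fun n => mul_nonneg (by positivity) (henn _ x y)) hbnd
        (summable_geometric_two.mul_left _)
    have htail : ∑' n : ℕ, (1 / 2 : ℝ) ^ (n + N) * e (n + N) x y ≤ (1 / 2) ^ N * 2 := by
      calc ∑' n : ℕ, (1 / 2 : ℝ) ^ (n + N) * e (n + N) x y
          ≤ ∑' n : ℕ, (1 / 2 : ℝ) ^ N * (1 / 2) ^ n :=
            Summable.tsum_le_tsum hbnd hs2 (summable_geometric_two.mul_left _)
        _ = (1 / 2) ^ N * 2 := by rw [tsum_mul_left, tsum_geometric_two]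
    have : D x y = ∑ n ∈ Finset.range N, (1 / 2 : ℝ) ^ n * e n x y +
        ∑' n : ℕ, (1 / 2 : ℝ) ^ (n + N) * e (n + N) x y := hsplit.symm
    rw [this]
    have hNbound : (1 / 2 : ℝ) ^ N * 2 ≤ ε / 2 := by nlinarith
    linarith
end
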